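/- arXiv:1503.06092 — 8 statements merged into one kernel-verified Lean document; each statement's English description precedes it below -/
import Mathlib

section
/- If a family I of subsets of ω is closed under taking subsets and is an Fσ subset of 2^ω, then I can be written as a countable increasing union of closed subsets of 2^ω each of which is closed under taking subsets. -/
/-- `I ⊆ 2^ω` is closed under taking subsets. -/
def SubsetClosed (I : Set (ℕ → Bool)) : Prop :=
  ∀ X Y : ℕ → Bool, (∀ n, X n = true → Y n = true) → Y ∈ I → X ∈ I

/-!
Order `2^ω` pointwise, so that subset-closed families are the lower sets. If `I = ⋃ n, F n`
with `F n` closed, take `G n` to be the lower closure of `F 0 ∪ ⋯ ∪ F n`. The lower closure of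
a closed set `C` is the projection of the closed set `{(x, y) | x ≤ y ∧ y ∈ C}` along the
compact factor, hence closed; so the `G n` are increasing closed lower sets, and their union is
the lower closure of `I`, which is `I` itself.
-/

open Set

instance : OrderClosedTopology Bool := ⟨isClosed_discrete _⟩

theorem IsClosed.lowerClosure_of_compactSpace {α : Type*} [TopologicalSpace α] [Preorder α]
    [CompactSpace α] [OrderClosedTopology α] {s : Set α} (hs : IsClosed s) :
    IsClosed (lowerClosure s : Set α) := by
  have hproj : (lowerClosure s : Set α) =
      Prod.fst '' ({p : α × α | p.1 ≤ p.2} ∩ Prod.snd ⁻¹' s) := by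
    ext x
    simp [and_comm]
  rw [hproj]
  exact isClosedMap_fst_of_compactSpace _ (isClosed_le_prod.inter (hs.preimage continuous_snd))

theorem IsLowerSet.exists_monotone_isClosed_isLowerSet_iUnion_eq {α : Type*}
    [TopologicalSpace α] [Preorder α] [CompactSpace α] [OrderClosedTopology α] {s : Set α}
    (hs : IsLowerSet s) {f : ℕ → Set α} (hf : ∀ n, IsClosed (f n)) (hsf : s = ⋃ n, f n) :
    ∃ g : ℕ → Set α, Monotone g ∧ (∀ n, IsClosed (g n)) ∧ (∀ n, IsLowerSet (g n)) ∧
      s = ⋃ n, g n := by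
  refine ⟨fun n ↦ lowerClosure (accumulate f n), fun m n hmn ↦ ?_, fun n ↦ ?_,
    fun n ↦ (lowerClosure _).lower, ?_⟩
  · exact lowerClosure_mono (monotone_accumulate hmn)
  · refine IsClosed.lowerClosure_of_compactSpace ?_
    rw [accumulate_def]
    exact (finite_Iic n).isClosed_biUnion fun k _ ↦ hf k
  · rw [← LowerSet.coe_iSup, ← lowerClosure_iUnion, iUnion_accumulate, ← hsf, hs.lowerClosure]

theorem subsetClosed_iff_isLowerSet {I : Set (ℕ → Bool)} : SubsetClosed I ↔ IsLowerSet I := by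
  simp only [SubsetClosed, IsLowerSet, Pi.le_def, Bool.le_iff_imp]
  exact ⟨fun h Y X hXY hY ↦ h X Y hXY hY, fun h X Y hXY hY ↦ h hXY hY⟩

/-- An `Fσ` subset-closed family of subsets of ω is a countable increasing union of
closed subset-closed sets. -/
theorem fsigma_subsetClosed_decomposition (I : Set (ℕ → Bool))
    (hI : SubsetClosed I)
    (hFσ : ∃ f : ℕ → Set (ℕ → Bool), (∀ n, IsClosed (f n)) ∧ I = ⋃ n, f n) :
    ∃ g : ℕ → Set (ℕ → Bool), Monotone g ∧ (∀ n, IsClosed (g n)) ∧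
      (∀ n, SubsetClosed (g n)) ∧ I = ⋃ n, g n := by
  obtain ⟨f, hf, hIf⟩ := hFσ
  simp only [subsetClosed_iff_isLowerSet] at hI ⊢
  exact hI.exists_monotone_isClosed_isLowerSet_iUnion_eq hf hIf
end

section
/- A semifilter S on ω is a Gδ subset of 2^ω if and only if there exists a monotone lower semicontinuous functional g : P(ω) → [0,∞] such that S = {X : g(X) = ∞}. -/
/-!
If `S = ⋂ k, V k` with `V k` open and decreasing, then, since `2^ω` is compact and `S` is upward
closed, every `X ∈ S` has for each `k` an initial segment `X ∩ [0, n)` all of whose supersets lie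
in `V k`. So `g X = sup {k + 1 | some initial segment of X has all its supersets in V k}` is
infinite exactly on `S`, and it is lower semicontinuous because it only looks at initial segments.
Conversely, `g = ⨆ n, g (X ∩ [0, n))` is a supremum of locally constant functions, hence lower
semicontinuous, and then `{g = ∞} = ⋂ k, {g > k}` is `Gδ`.
-/

open scoped ENNReal

def AlmostSubC (X Y : ℕ → Bool) : Prop :=
  ({n | X n = true} \ {n | Y n = true}).Finite

def IsSemifilterC (S : Set (ℕ → Bool)) : Prop :=
  S.Nonempty ∧ S ≠ Set.univ ∧ ∀ X Y : ℕ → Bool, X ∈ S → AlmostSubC X Y → Y ∈ S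

/-- A monotone lower semicontinuous functional on `P(ω)`:
`g(∅) = 0`, `g` is finite on finite sets, monotone under `⊆`, and
`g(A) = sup_n g(A ∩ [0,n))`. -/
def MonotoneLSC (g : (ℕ → Bool) → ℝ≥0∞) : Prop :=
  g (fun _ => false) = 0 ∧
  (∀ X : ℕ → Bool, {n | X n = true}.Finite → g X < ⊤) ∧
  (∀ X Y : ℕ → Bool, (∀ n, X n = true → Y n = true) → g X ≤ g Y) ∧
  (∀ X : ℕ → Bool, g X = ⨆ n : ℕ, g (fun i => X i && decide (i < n)))

open Set

namespace IsSemifilterC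

variable {S : Set (ℕ → Bool)}

theorem isUpperSet (hS : IsSemifilterC S) : IsUpperSet S := by
  intro X Y hXY hX
  refine hS.2.2 X Y hX (finite_empty.subset fun i hi => ?_)
  exact hi.2 (Bool.le_iff_imp.mp (hXY i) hi.1)

theorem notMem_of_finite (hS : IsSemifilterC S) {X : ℕ → Bool}
    (hX : {n | X n = true}.Finite) : X ∉ S := by
  intro hXS
  have hbot : ⊥ ∈ S := hS.2.2 X ⊥ hXS (hX.subset sdiff_subset)
  exact hS.2.1 (eq_univ_of_forall fun Y => hS.isUpperSet bot_le hbot)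

end IsSemifilterC

theorem IsGδ.exists_antitone_isOpen_subset {α : Type*} [TopologicalSpace α] {S W : Set α}
    (hS : IsGδ S) (hW : IsOpen W) (hSW : S ⊆ W) :
    ∃ V : ℕ → Set α, Antitone V ∧ (∀ k, IsOpen (V k)) ∧ V 0 ⊆ W ∧ S = ⋂ k, V k := by
  obtain ⟨U, hUo, rfl⟩ := isGδ_iff_eq_iInter_nat.mp hS
  refine ⟨fun k => W ∩ ⋂ j ∈ Finset.range (k + 1), U j, fun k l hkl => ?_,
    fun k => hW.inter (isOpen_biInter_finset fun j _ => hUo j), inter_subset_left, ?_⟩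
  · exact inter_subset_inter_right W
      (biInter_subset_biInter_left (by simpa using Nat.succ_le_succ hkl))
  · refine Subset.antisymm (fun X hX => mem_iInter.mpr fun k => ⟨hSW hX, ?_⟩)
      (fun X hX => mem_iInter.mpr fun k => ?_)
    · exact mem_iInter₂.mpr fun j _ => mem_iInter.mp hX j
    · exact mem_iInter₂.mp (mem_iInter.mp hX k).2 k (by simp)

theorem LowerSemicontinuous.isGδ_setOf_eq_top {α : Type*} [TopologicalSpace α] {f : α → ℝ≥0∞}
    (hf : LowerSemicontinuous f) : IsGδ {x | f x = ⊤} := by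
  have : {x | f x = ⊤} = ⋂ k : ℕ, f ⁻¹' Ioi k := by
    ext x
    simp only [mem_ofPred_eq, mem_iInter, mem_preimage, mem_Ioi]
    refine ⟨fun h k => h ▸ ENNReal.natCast_lt_top k, fun h => ?_⟩
    exact top_unique (ENNReal.iSup_natCast ▸ iSup_le fun k => (h k).le)
  rw [this]
  exact IsGδ.iInter_of_isOpen fun k => hf.isOpen_preimage k

def trunc (n : ℕ) (X : ℕ → Bool) : ℕ → Bool := fun i => X i && decide (i < n)

theorem trunc_le (n : ℕ) (X : ℕ → Bool) : trunc n X ≤ X := fun _ => Bool.and_le_left _ _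

theorem trunc_mono {X Y : ℕ → Bool} (h : X ≤ Y) (n : ℕ) : trunc n X ≤ trunc n Y := fun i => by
  cases hi : decide (i < n) <;> simp [trunc, hi, h i]

theorem monotone_trunc (X : ℕ → Bool) : Monotone fun n => trunc n X := fun m n hmn i => by
  by_cases hi : i < m
  · simp [trunc, hi, hi.trans_le hmn]
  · simp [trunc, hi]

theorem trunc_trunc_self (n : ℕ) (X : ℕ → Bool) : trunc n (trunc n X) = trunc n X := by
  funext i
  simp [trunc]

theorem isLocallyConstant_trunc (n : ℕ) : IsLocallyConstant (trunc n) := by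
  have : trunc n = (fun Y : Fin n → Bool => fun i => if h : i < n then Y ⟨i, h⟩ else false) ∘
      fun X i => X i := by
    funext X i
    by_cases h : i < n <;> simp [trunc, h]
  rw [this]
  exact (IsLocallyConstant.of_discrete _).comp_continuous (by fun_prop)

theorem lowerSemicontinuous_of_eq_iSup_trunc {g : (ℕ → Bool) → ℝ≥0∞}
    (hg : ∀ X, g X = ⨆ n, g (trunc n X)) : LowerSemicontinuous g := by
  rw [funext hg]
  exact lowerSemicontinuous_iSup fun n =>
    ((isLocallyConstant_trunc n).comp g).continuous.lowerSemicontinuous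

theorem isClosed_Ici_bool (F : ℕ → Bool) : IsClosed (Ici F) :=
  pi_univ_Ici F ▸ isClosed_set_pi fun _ _ => isClosed_discrete _

theorem exists_Ici_trunc_subset {S U : Set (ℕ → Bool)} (hS : IsUpperSet S) (hU : IsOpen U)
    (hSU : S ⊆ U) {X : ℕ → Bool} (hX : X ∈ S) : ∃ n, Ici (trunc n X) ⊆ U := by
  refine exists_subset_nhds_of_isCompact (((monotone_trunc X).Ici).directed_ge)
    (fun n => (isClosed_Ici_bool _).isCompact) fun Y hY => hU.mem_nhds (hSU (hS ?_ hX))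
  intro i
  simpa [trunc] using mem_iInter.mp hY (i + 1) i

noncomputable def gdeltaFunctional (V : ℕ → Set (ℕ → Bool)) (X : ℕ → Bool) : ℝ≥0∞ :=
  ⨆ (n : ℕ) (k : ℕ) (_ : Ici (trunc n X) ⊆ V k), (k + 1 : ℝ≥0∞)

namespace gdeltaFunctional

variable {V : ℕ → Set (ℕ → Bool)}

theorem monotone : Monotone (gdeltaFunctional V) := fun _ _ hXY =>
  iSup₂_mono fun n _ => iSup_mono' fun h =>
    ⟨(Ici_subset_Ici.mpr (trunc_mono hXY n)).trans h, le_rfl⟩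

theorem eq_iSup_trunc (X : ℕ → Bool) :
    gdeltaFunctional V X = ⨆ n, gdeltaFunctional V (trunc n X) := by
  refine le_antisymm (iSup_mono fun n => ?_) (iSup_le fun n => monotone (trunc_le n X))
  exact le_iSup_of_le n (by rw [trunc_trunc_self])

theorem eq_top_iff (hV : Antitone V) (X : ℕ → Bool) :
    gdeltaFunctional V X = ⊤ ↔ ∀ k, ∃ n, Ici (trunc n X) ⊆ V k := by
  refine ⟨fun h k => ?_, fun h => top_unique (ENNReal.iSup_natCast ▸ iSup_le fun k => ?_)⟩
  · have hk : (k : ℝ≥0∞) < gdeltaFunctional V X := h ▸ ENNReal.natCast_lt_top k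
    simp only [gdeltaFunctional, lt_iSup_iff] at hk
    obtain ⟨n, l, hl, hlt⟩ := hk
    have hkl : k < l + 1 := by exact_mod_cast hlt
    exact ⟨n, hl.trans (hV (Nat.lt_succ_iff.mp hkl))⟩
  · obtain ⟨n, hn⟩ := h k
    calc (k : ℝ≥0∞) ≤ k + 1 := le_self_add
      _ ≤ gdeltaFunctional V X := le_iSup₂_of_le n k (le_iSup_of_le hn le_rfl)

theorem eq_top_iff_mem_iInter (hV : Antitone V) (hVo : ∀ k, IsOpen (V k))
    (hup : IsUpperSet (⋂ k, V k)) (X : ℕ → Bool) : gdeltaFunctional V X = ⊤ ↔ X ∈ ⋂ k, V k := by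
  rw [eq_top_iff hV]
  exact ⟨fun h => mem_iInter.mpr fun k => (h k).elim fun n hn => hn (trunc_le n X),
    fun hX k => exists_Ici_trunc_subset hup (hVo k) (iInter_subset V k) hX⟩

theorem bot_eq_zero (hV : Antitone V) (h : ⊥ ∉ V 0) : gdeltaFunctional V ⊥ = 0 :=
  le_antisymm (iSup₂_le fun n k => iSup_le fun hk => absurd (hV k.zero_le (hk (trunc_le n ⊥))) h)
    bot_le

end gdeltaFunctional

/-- A semifilter is `Gδ` in `2^ω` iff it is the set of sets of infinite value of some
monotone lower semicontinuous functional. -/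
theorem gdelta_iff_functional (S : Set (ℕ → Bool)) (hS : IsSemifilterC S) :
    IsGδ S ↔ ∃ g : (ℕ → Bool) → ℝ≥0∞, MonotoneLSC g ∧ S = {X | g X = ⊤} := by
  refine ⟨fun hG => ?_, ?_⟩
  · -- Keeping `V 0` inside `{⊥}ᶜ` is what makes the functional vanish at `⊥`.
    obtain ⟨V, hV, hVo, hV0, rfl⟩ := hG.exists_antitone_isOpen_subset isOpen_compl_singleton
      fun X hX (hbot : X = ⊥) => hS.notMem_of_finite (by simp [hbot]) hX
    have htop := gdeltaFunctional.eq_top_iff_mem_iInter hV hVo hS.isUpperSet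
    refine ⟨gdeltaFunctional V, ⟨gdeltaFunctional.bot_eq_zero hV fun h => hV0 h rfl,
      fun X hX => lt_top_iff_ne_top.mpr fun h => hS.notMem_of_finite hX ((htop X).mp h),
      fun X Y h => gdeltaFunctional.monotone fun i => Bool.le_iff_imp.mpr (h i),
      gdeltaFunctional.eq_iSup_trunc⟩, ext fun X => (htop X).symm⟩
  · rintro ⟨g, hg, rfl⟩
    exact (lowerSemicontinuous_of_eq_iSup_trunc hg.2.2.2).isGδ_setOf_eq_top
end

section
/- If S and G are semifilters and there is a finite-to-one function f : ω → ω such that A ∈ G iff f⁻¹[A] ∈ S, then 𝔭_S ≤ 𝔭_G, where 𝔭_S denotes the least cardinality of a centered subset of S having no lower bound in S (with respect to ⊆*). -/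
/-!
Pulling back along `f` turns a centered family `F ⊆ G` with no lower bound in `G` into the
centered family `{f⁻¹[B] | B ∈ F} ⊆ S`, of cardinality at most `#F`, which still has no lower
bound in `S`: if `A ∈ S` were one, then `f[A]` would be a lower bound of `F` in `G`, since
`f[A] \ B ⊆ f[A \ f⁻¹[B]]` and `f⁻¹[f[A]] ⊇ A` lies in `S`.
-/

open Cardinal

/-- `A ⊆* B`: almost-inclusion of subsets of ω. -/
def AlmostSub (A B : Set ℕ) : Prop := (A \ B).Finite

/-- A semifilter on ω: nonempty, proper, closed upwards under `⊆*`. -/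
def IsSemifilter (S : Set (Set ℕ)) : Prop :=
  S.Nonempty ∧ S ≠ Set.univ ∧ ∀ A B : Set ℕ, A ∈ S → AlmostSub A B → B ∈ S

/-- `F` is centered in `S`: all (nonempty) finite intersections of members of `F` lie in `S`. -/
def CenteredIn (S F : Set (Set ℕ)) : Prop :=
  F ⊆ S ∧ ∀ T : Finset (Set ℕ), T.Nonempty → ↑T ⊆ F → ⋂₀ (T : Set (Set ℕ)) ∈ S

/-- `F` has a `⊆*`-lower bound belonging to `S`. -/
def HasLowerBoundIn (S F : Set (Set ℕ)) : Prop :=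
  ∃ A ∈ S, ∀ B ∈ F, AlmostSub A B

/-- `𝔭_S`: the least cardinality of a centered subset of `S` with no lower bound in `S`. -/
noncomputable def pInv (S : Set (Set ℕ)) : Cardinal :=
  sInf {c | ∃ F : Set (Set ℕ), CenteredIn S F ∧ ¬ HasLowerBoundIn S F ∧ c = #F}

lemma AlmostSub.of_subset {A B : Set ℕ} (h : A ⊆ B) : AlmostSub A B := by
  simp only [AlmostSub, Set.sdiff_eq_empty.2 h, Set.finite_empty]

lemma AlmostSub.image_of_preimage {f : ℕ → ℕ} {A B : Set ℕ} (h : AlmostSub A (f ⁻¹' B)) :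
    AlmostSub (f '' A) B := by
  refine (h.image f).subset ?_
  rintro _ ⟨⟨x, hx, rfl⟩, hxB⟩
  exact ⟨x, ⟨hx, hxB⟩, rfl⟩

lemma IsSemifilter.mem_of_subset {S : Set (Set ℕ)} (hS : IsSemifilter S) {A B : Set ℕ}
    (hA : A ∈ S) (h : A ⊆ B) : B ∈ S :=
  hS.2.2 A B hA (.of_subset h)

lemma CenteredIn.preimage {S G F : Set (Set ℕ)} {f : ℕ → ℕ} (hF : CenteredIn G F)
    (hGS : ∀ A ∈ G, f ⁻¹' A ∈ S) : CenteredIn S (Set.preimage f '' F) := by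
  classical
  refine ⟨Set.image_subset_iff.2 fun B hB => hGS B (hF.1 hB), fun T hT hTF => ?_⟩
  obtain ⟨T₀, hT₀F, rfl⟩ := Finset.subset_set_image_iff.1 hTF
  have hinter : ⋂₀ (↑(T₀.image (Set.preimage f)) : Set (Set ℕ)) = f ⁻¹' ⋂₀ ↑T₀ := by
    rw [Finset.coe_image, Set.sInter_image, Set.preimage_sInter]
  rw [hinter]
  exact hGS _ (hF.2 T₀ (Finset.image_nonempty.1 hT) hT₀F)

lemma HasLowerBoundIn.of_preimage {S G F : Set (Set ℕ)} {f : ℕ → ℕ} (hS : IsSemifilter S)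
    (hSG : ∀ A, f ⁻¹' A ∈ S → A ∈ G) (h : HasLowerBoundIn S (Set.preimage f '' F)) :
    HasLowerBoundIn G F := by
  obtain ⟨A, hA, hlb⟩ := h
  exact ⟨f '' A, hSG _ (hS.mem_of_subset hA (Set.subset_preimage_image f A)),
    fun B hB => (hlb _ ⟨B, hB, rfl⟩).image_of_preimage⟩

lemma pInv_le_mk {S F : Set (Set ℕ)} (hF : CenteredIn S F) (hunb : ¬ HasLowerBoundIn S F) :
    pInv S ≤ #F :=
  csInf_le' ⟨F, hF, hunb, rfl⟩

theorem pInv_le_of_RB_general (S G : Set (Set ℕ)) (hS : IsSemifilter S)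
    (f : ℕ → ℕ)
    (hRB : ∀ A : Set ℕ, A ∈ G ↔ f ⁻¹' A ∈ S)
    (hWG : ∃ F : Set (Set ℕ), CenteredIn G F ∧ ¬ HasLowerBoundIn G F) :
    pInv S ≤ pInv G := by
  obtain ⟨F₀, hF₀⟩ := hWG
  refine le_csInf ⟨_, F₀, hF₀.1, hF₀.2, rfl⟩ ?_
  rintro _ ⟨F, hcent, hunb, rfl⟩
  have hcent' : CenteredIn S (Set.preimage f '' F) := hcent.preimage fun A => (hRB A).1
  have hunb' : ¬ HasLowerBoundIn S (Set.preimage f '' F) := fun h =>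
    hunb (h.of_preimage hS fun A => (hRB A).2)
  exact (pInv_le_mk hcent' hunb').trans mk_image_le

/-- If `S ≥_RB G` via a finite-to-one `f`, then `𝔭_S ≤ 𝔭_G`.  (The hypothesis `hWG`
reflects the standing assumption of the paper that unbounded centered subsets of a
semifilter exist, so that `𝔭_G` is a genuine minimum.) -/
theorem pInv_le_of_RB (S G : Set (Set ℕ)) (hS : IsSemifilter S) (hG : IsSemifilter G)
    (f : ℕ → ℕ) (hfin : ∀ n : ℕ, (f ⁻¹' {n}).Finite)
    (hRB : ∀ A : Set ℕ, A ∈ G ↔ f ⁻¹' A ∈ S)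
    (hWG : ∃ F : Set (Set ℕ), CenteredIn G F ∧ ¬ HasLowerBoundIn G F) :
    pInv S ≤ pInv G :=
  pInv_le_of_RB_general S G hS f hRB hWG
end

section
/- A semifilter S on ω is co-meager in 2^ω if and only if S contains a semifilter that is a Gδ subset of 2^ω. -/
open Set Filter

namespace PiNat

variable {E : ℕ → Type*} [∀ n, TopologicalSpace (E n)] [∀ n, DiscreteTopology (E n)]

theorem dense_iff_inter_cylinder_nonempty {D : Set (∀ n, E n)} :
    Dense D ↔ ∀ x n, (cylinder x n ∩ D).Nonempty := by
  rw [(isTopologicalBasis_cylinders E).dense_iff]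
  constructor
  · exact fun h x n => h _ ⟨x, n, rfl⟩ ⟨x, self_mem_cylinder x n⟩
  · rintro h _ ⟨x, n, rfl⟩ -
    exact h x n

theorem exists_cylinder_subset {U : Set (∀ n, E n)} (hU : IsOpen U) {x : ∀ n, E n} (hx : x ∈ U) :
    ∃ n, cylinder x n ⊆ U := by
  obtain ⟨_, ⟨y, n, rfl⟩, hxy, hyU⟩ :=
    (isTopologicalBasis_cylinders E).exists_subset_of_mem_open hx hU
  exact ⟨n, by rwa [mem_cylinder_iff_eq.1 hxy]⟩

theorem exists_forall_exists_cylinder_subset [∀ n, CompactSpace (E n)] {D : Set (∀ n, E n)}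
    (hDo : IsOpen D) (hDd : Dense D) (m : ℕ) :
    ∃ M, ∀ s, ∃ t ∈ cylinder s m, cylinder t M ⊆ D := by
  have hlocal : ∀ s, ∃ t ∈ cylinder s m, ∃ N, cylinder t N ⊆ D := fun s =>
    let ⟨t, hts, htD⟩ := dense_iff_inter_cylinder_nonempty.1 hDd s m
    ⟨t, hts, exists_cylinder_subset hDo htD⟩
  choose t hts N hN using hlocal
  obtain ⟨F, hF⟩ := isCompact_univ.elim_finite_subcover (fun s => cylinder s m)
    (fun s => isOpen_cylinder E s m) fun s _ => mem_iUnion.2 ⟨s, self_mem_cylinder s m⟩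
  refine ⟨F.sup N, fun s => ?_⟩
  obtain ⟨r, hrF, hsr⟩ := mem_iUnion₂.1 (hF (mem_univ s))
  refine ⟨t r, ?_, (cylinder_anti _ (Finset.le_sup hrF)).trans (hN r)⟩
  rw [mem_cylinder_iff_eq.1 hsr]
  exact hts r

theorem exists_strictMono_cylinder_subset [∀ n, CompactSpace (E n)] {D : ℕ → Set (∀ n, E n)}
    (hDo : ∀ k, IsOpen (D k)) (hDd : ∀ k, Dense (D k)) :
    ∃ a : ℕ → ℕ, StrictMono a ∧ ∀ k s, ∃ t ∈ cylinder s (a k), cylinder t (a (k + 1)) ⊆ D k := by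
  choose M hM using fun k => exists_forall_exists_cylinder_subset (hDo k) (hDd k)
  let a : ℕ → ℕ := fun k => Nat.rec 0 (fun k ak => max (M k ak) (ak + 1)) k
  refine ⟨a, strictMono_nat_of_lt_succ fun k => (lt_add_one _).trans_le (le_max_right _ _),
    fun k s => ?_⟩
  obtain ⟨t, hts, htD⟩ := hM k (a k) s
  exact ⟨t, hts, (cylinder_anti t (le_max_left _ _)).trans htD⟩

end PiNat

open PiNat

theorem almostSubC_of_le {X Y : ℕ → Bool} (h : X ≤ Y) : AlmostSubC X Y :=
  finite_empty.subset fun i ⟨hX, hY⟩ =>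
    hY (top_le_iff.1 (by simpa [show X i = true from hX] using h i))

theorem IsSemifilterC.mem_of_le {S : Set (ℕ → Bool)} (hS : IsSemifilterC S) {X Y : ℕ → Bool}
    (hX : X ∈ S) (h : X ≤ Y) : Y ∈ S :=
  hS.2.2 X Y hX (almostSubC_of_le h)

theorem IsSemifilterC.dense {G : Set (ℕ → Bool)} (hG : IsSemifilterC G) : Dense G := by
  obtain ⟨X, hX⟩ := hG.1
  refine dense_iff_inter_cylinder_nonempty.2 fun x N =>
    ⟨fun i => if i < N then x i else true, fun i hi => if_pos hi, hG.2.2 X _ hX ?_⟩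
  refine (finite_Iio N).subset fun i ⟨_, hi⟩ => ?_
  by_contra h
  exact hi (if_neg h)

def blockSemifilter (a : ℕ → ℕ) : Set (ℕ → Bool) :=
  {Y | ∃ᶠ k in atTop, ∀ i ∈ Ico (a k) (a (k + 1)), Y i = true}

theorem isGδ_blockSemifilter (a : ℕ → ℕ) : IsGδ (blockSemifilter a) := by
  have hblock : ∀ k, IsOpen {Y : ℕ → Bool | ∀ i ∈ Ico (a k) (a (k + 1)), Y i = true} := by
    intro k
    simp only [ofPred_forall]
    exact (finite_Ico _ _).isOpen_biInter fun i _ =>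
      (isOpen_discrete {true}).preimage (continuous_apply (A := fun _ => Bool) i)
  have hG : blockSemifilter a =
      ⋂ m, ⋃ k ≥ m, {Y : ℕ → Bool | ∀ i ∈ Ico (a k) (a (k + 1)), Y i = true} := by
    ext Y
    simp [blockSemifilter, frequently_atTop]
  rw [hG]
  exact IsGδ.iInter_of_isOpen fun m => isOpen_biUnion fun k _ => hblock k

theorem isSemifilterC_blockSemifilter {a : ℕ → ℕ} (ha : StrictMono a) :
    IsSemifilterC (blockSemifilter a) := by
  refine ⟨⟨fun _ => true, Frequently.of_forall fun _ _ _ => rfl⟩, fun h => ?_, ?_⟩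
  · obtain ⟨k, hk⟩ := (h ▸ mem_univ (fun _ => false) : _ ∈ blockSemifilter a).exists
    simpa using hk (a k) ⟨le_rfl, ha (lt_add_one k)⟩
  · intro X Y hX hXY
    obtain ⟨N, hN⟩ := hXY.bddAbove
    refine hX.mp ((ha.tendsto_atTop.eventually_gt_atTop N).mono fun k hk hXk i hi => ?_)
    by_contra hYi
    exact absurd (hN ⟨hXk i hi, hYi⟩) (hk.trans_le hi.1).not_ge

theorem exists_le_mem_iInter_of_mem_blockSemifilter {a : ℕ → ℕ} (ha : StrictMono a)
    {D : ℕ → Set (ℕ → Bool)} (hDo : ∀ n, IsOpen (D n))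
    (hP : ∀ k s, ∃ t ∈ cylinder s (a k), cylinder t (a (k + 1)) ⊆ ⋂ n ≤ k, D n)
    {Y : ℕ → Bool} (hY : Y ∈ blockSemifilter a) :
    ∃ X ∈ ⋂ n, D n, X ≤ Y := by
  have hcont : Continuous fun X : ℕ → Bool => X ⊓ Y :=
    continuous_pi fun i => (continuous_of_discreteTopology (f := (· ⊓ Y i))).comp
      (continuous_apply i)
  have hdense : ∀ n, Dense ((· ⊓ Y) ⁻¹' D n) := by
    intro n
    refine dense_iff_inter_cylinder_nonempty.2 fun x N => ?_
    obtain ⟨k, hYk, hnk, hNk⟩ := (hY.and_eventually ((eventually_ge_atTop n).and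
      (ha.tendsto_atTop.eventually_ge_atTop N))).exists
    obtain ⟨t, hxt, htD⟩ := hP k (x ⊓ Y)
    -- copy `t` into the `k`-th block, which lies in `Y`
    let x' : ℕ → Bool := fun i => if i ∈ Ico (a k) (a (k + 1)) then t i else x i
    refine ⟨x', fun i hi => if_neg fun h => (hi.trans_le hNk).not_ge h.1, ?_⟩
    have hx't : x' ⊓ Y ∈ cylinder t (a (k + 1)) := by
      intro i hi
      show x' i ⊓ Y i = t i
      by_cases hik : a k ≤ i
      · rw [show x' i = t i from if_pos ⟨hik, hi⟩, hYk i ⟨hik, hi⟩]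
        exact inf_top_eq _
      · rw [show x' i = x i from if_neg fun h => hik h.1]
        exact (hxt i (not_le.1 hik)).symm
    exact mem_iInter₂.1 (htD hx't) n hnk
  obtain ⟨X, hX⟩ := (dense_iInter_of_isOpen_nat (fun n => (hDo n).preimage hcont) hdense).nonempty
  exact ⟨X ⊓ Y, mem_iInter.2 fun n => mem_iInter.1 hX n, inf_le_right⟩

/-- A semifilter is co-meager in `2^ω` iff it contains a `Gδ` semifilter. -/
theorem comeager_iff_contains_gdelta (S : Set (ℕ → Bool)) (hS : IsSemifilterC S) :
    IsMeagre Sᶜ ↔ ∃ G : Set (ℕ → Bool), G ⊆ S ∧ IsSemifilterC G ∧ IsGδ G := by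
  rw [IsMeagre, compl_compl, mem_residual]
  constructor
  · rintro ⟨H, hHS, hHδ, hHd⟩
    obtain ⟨D, hDo, rfl⟩ := isGδ_iff_eq_iInter_nat.1 hHδ
    have hDd : ∀ n, Dense (D n) := fun n => hHd.mono (iInter_subset D n)
    obtain ⟨a, ha, hP⟩ := exists_strictMono_cylinder_subset (D := fun k => ⋂ n ≤ k, D n)
      (fun k => (finite_Iic k).isOpen_biInter fun n _ => hDo n)
      (fun k => dense_biInter_of_isOpen (fun n _ => hDo n) (finite_Iic k).countable
        fun n _ => hDd n)
    refine ⟨blockSemifilter a, fun Y hY => ?_, isSemifilterC_blockSemifilter ha,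
      isGδ_blockSemifilter a⟩
    obtain ⟨X, hXH, hXY⟩ := exists_le_mem_iInter_of_mem_blockSemifilter ha hDo hP hY
    exact hS.mem_of_le (hHS hXH) hXY
  · rintro ⟨G, hGS, hG, hGδ⟩
    exact ⟨G, hGS, hGδ, hG.dense⟩
end

section
/- Let S be a semifilter and U an open subset of 2^ω with S ⊆ U. Then for every X ∈ S there is a function f : ω → ω such that for every m, every Y ⊆ ω with Y ∩ [m, f(m)) = X ∩ [m, f(m)) belongs to U. -/
open Filter PiNat

section Cylinders

variable {E : ℕ → Type*} [∀ n, TopologicalSpace (E n)] [∀ n, DiscreteTopology (E n)]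

theorem PiNat.eventually_cylinder_subset {U : Set (∀ n, E n)} (hU : IsOpen U) {x : ∀ n, E n}
    (hx : x ∈ U) : ∀ᶠ n in atTop, cylinder x n ⊆ U := by
  obtain ⟨_, ⟨y, n, rfl⟩, hxy, hyU⟩ :=
    (isTopologicalBasis_cylinders E).exists_subset_of_mem_open hx hU
  rw [← mem_cylinder_iff_eq.1 hxy] at hyU
  exact eventually_atTop.2 ⟨n, fun k hk => (cylinder_anti x hk).trans hyU⟩

theorem Set.Finite.exists_cylinder_subset {K U : Set (∀ n, E n)} (hK : K.Finite)
    (hU : IsOpen U) (hKU : K ⊆ U) : ∃ n, ∀ x ∈ K, cylinder x n ⊆ U :=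
  (hK.eventually_all.2 fun _ hx => eventually_cylinder_subset hU (hKU hx)).exists

end Cylinders

theorem finite_setOf_eqOn_Ici {α : Type*} [Finite α] (x : ℕ → α) (m : ℕ) :
    {y : ℕ → α | ∀ i, m ≤ i → y i = x i}.Finite := by
  refine Set.Finite.of_injOn (f := fun y (i : Fin m) => y i) (Set.mapsTo_univ _ _)
    (fun y hy z hz hyz => funext fun i => ?_) Set.finite_univ
  rcases lt_or_ge i m with hi | hi
  · exact congrFun hyz ⟨i, hi⟩
  · rw [hy i hi, hz i hi]

theorem almostSubC_of_eq_of_le {X Y : ℕ → Bool} {m : ℕ} (h : ∀ i, m ≤ i → Y i = X i) :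
    AlmostSubC X Y :=
  (Set.finite_lt_nat m).subset fun i ⟨hXi, hYi⟩ =>
    lt_of_not_ge fun hi => hYi ((h i hi).trans hXi)

/-- If `S` is a semifilter contained in an open set `U ⊆ 2^ω`, then for every `X ∈ S`
there is `f : ω → ω` such that for each `m`, every `Y` agreeing with `X` on the
interval `[m, f(m))` belongs to `U`. -/
theorem fast_function (S U : Set (ℕ → Bool)) (hS : IsSemifilterC S)
    (hU : IsOpen U) (hSU : S ⊆ U) (X : ℕ → Bool) (hX : X ∈ S) :
    ∃ f : ℕ → ℕ, ∀ m : ℕ, ∀ Y : ℕ → Bool,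
      (∀ i, m ≤ i → i < f m → Y i = X i) → Y ∈ U := by
  have hTailU : ∀ m, {Y : ℕ → Bool | ∀ i, m ≤ i → Y i = X i} ⊆ U := fun m Y hY =>
    hSU (hS.2.2 X Y hX (almostSubC_of_eq_of_le hY))
  choose f hf using fun m => (finite_setOf_eqOn_Ici X m).exists_cylinder_subset hU (hTailU m)
  refine ⟨f, fun m Y hY => ?_⟩
  let Y' : ℕ → Bool := fun i => if i < m then Y i else X i
  have hY'_tail : ∀ i, m ≤ i → Y' i = X i := fun i hi => if_neg (not_lt.2 hi)
  refine hf m Y' hY'_tail (mem_cylinder_iff.2 fun i hi => ?_)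
  by_cases him : i < m
  · exact (if_pos him).symm
  · rw [hY'_tail i (not_lt.1 him), hY i (not_lt.1 him) hi]
end

section
/- For any semifilter S: if 𝔭_S ≤ ℵ₀ then 𝔭_S = 𝔱_S = ℵ₀. Consequently, under CH, 𝔭_S = 𝔱_S for every semifilter S. -/
open Cardinal

noncomputable def tInv (S : Set (Set ℕ)) : Cardinal :=
  sInf {c | ∃ F : Set (Set ℕ), F ⊆ S ∧ IsChain AlmostSub F ∧
    ¬ HasLowerBoundIn S F ∧ c = #F}

/-!
An unbounded centered family in a semifilter `S` is infinite, since a finite one is bounded by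
its intersection; so `ℵ₀ ≤ 𝔭_S`, and `𝔭_S ≤ 𝔱_S` because chains are centered. If `𝔭_S = ℵ₀` is
witnessed by `F = {f₀, f₁, …}`, the partial intersections `f₀ ∩ ⋯ ∩ fₙ` lie in `S` and form a
decreasing chain with the same lower bounds as `F`, so `𝔱_S = ℵ₀` as well. Under CH either
`𝔭_S = ℵ₀`, or `ℵ₁ ≤ 𝔭_S ≤ 𝔱_S ≤ 𝔠 = ℵ₁`.
-/

namespace AlmostSub

lemma refl (A : Set ℕ) : AlmostSub A A := by
  simp [AlmostSub]

lemma of_subset_s8 {A B : Set ℕ} (h : A ⊆ B) : AlmostSub A B := by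
  simp [AlmostSub, Set.sdiff_eq_empty.mpr h]

lemma trans {A B C : Set ℕ} (hAB : AlmostSub A B) (hBC : AlmostSub B C) : AlmostSub A C :=
  (hAB.union hBC).subset fun x hx => by
    by_cases hB : x ∈ B
    · exact Or.inr ⟨hB, hx.2⟩
    · exact Or.inl ⟨hx.1, hB⟩

lemma sInter {A : Set ℕ} {T : Set (Set ℕ)} (hT : T.Finite) (hA : ∀ B ∈ T, AlmostSub A B) :
    AlmostSub A (⋂₀ T) :=
  (hT.biUnion hA).subset fun x hx => by simpa using hx

end AlmostSub

lemma IsChain.exists_almostSub_forall {T : Finset (Set ℕ)} (hT : T.Nonempty)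
    (hch : IsChain AlmostSub (T : Set (Set ℕ))) : ∃ m ∈ T, ∀ B ∈ T, AlmostSub m B := by
  have : Nonempty T := hT.to_subtype
  have : Std.Refl (flip AlmostSub) := ⟨AlmostSub.refl⟩
  have : IsTrans (Set ℕ) (flip AlmostSub) := ⟨fun _ _ _ h₁ h₂ => h₂.trans h₁⟩
  have hdir := hch.symm.directedOn.directed_val
  obtain ⟨m, hm⟩ := hdir.finset_le Finset.univ
  exact ⟨m, m.2, fun B hB => hm ⟨B, hB⟩ (Finset.mem_univ _)⟩

lemma hasLowerBoundIn_empty {S : Set (Set ℕ)} (hS : S.Nonempty) : HasLowerBoundIn S ∅ :=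
  ⟨hS.some, hS.some_mem, by simp⟩

lemma centeredIn_of_isChain {S F : Set (Set ℕ)} (hS : IsSemifilter S) (hFS : F ⊆ S)
    (hch : IsChain AlmostSub F) : CenteredIn S F := by
  refine ⟨hFS, fun T hT hTF => ?_⟩
  obtain ⟨m, hm, hmin⟩ := (hch.mono hTF).exists_almostSub_forall hT
  exact hS.2.2 m _ (hFS (hTF hm)) (AlmostSub.sInter T.finite_toSet hmin)

lemma CenteredIn.hasLowerBoundIn_of_finite {S F : Set (Set ℕ)} (hS : S.Nonempty)
    (hc : CenteredIn S F) (hF : F.Finite) : HasLowerBoundIn S F := by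
  rcases F.eq_empty_or_nonempty with rfl | hne
  · exact hasLowerBoundIn_empty hS
  · refine ⟨⋂₀ F, ?_, fun B hB => AlmostSub.of_subset_s8 (Set.sInter_subset_of_mem hB)⟩
    simpa using hc.2 hF.toFinset (by simpa using hne) (by simp)

lemma CenteredIn.aleph0_le_card {S F : Set (Set ℕ)} (hS : S.Nonempty) (hc : CenteredIn S F)
    (hub : ¬ HasLowerBoundIn S F) : ℵ₀ ≤ #F := by
  rw [aleph0_le_mk_iff, Set.infinite_coe_iff]
  exact fun hF => hub (hc.hasLowerBoundIn_of_finite hS hF)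

lemma CenteredIn.exists_isChain_of_countable {S F : Set (Set ℕ)} (hS : S.Nonempty)
    (hc : CenteredIn S F) (hub : ¬ HasLowerBoundIn S F) (hF : F.Countable) :
    ∃ G ⊆ S, IsChain AlmostSub G ∧ ¬ HasLowerBoundIn S G ∧ G.Countable := by
  have hne : F.Nonempty :=
    Set.nonempty_iff_ne_empty.mpr fun h => hub (h ▸ hasLowerBoundIn_empty hS)
  obtain ⟨f, rfl⟩ := hF.exists_eq_range hne
  let B (n : ℕ) : Set ℕ := ⋂₀ ↑((Finset.Iic n).image f)
  have hB_mem (n : ℕ) : B n ∈ S := hc.2 _ (by simp) (by simp)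
  have hB_anti : Antitone B := fun m n hmn =>
    Set.sInter_subset_sInter <| Finset.coe_subset.mpr <|
      Finset.image_subset_image (Finset.Iic_subset_Iic.mpr hmn)
  have hB_sub (n : ℕ) : B n ⊆ f n :=
    Set.sInter_subset_of_mem <| Finset.mem_coe.mpr <|
      Finset.mem_image_of_mem f (Finset.mem_Iic.mpr le_rfl)
  refine ⟨Set.range B, Set.range_subset_iff.mpr hB_mem,
    hB_anti.isChain_range.mono_rel fun _ _ h => AlmostSub.of_subset_s8 h, ?_, Set.countable_range B⟩
  rintro ⟨A, hA, hAB⟩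
  exact hub ⟨A, hA, Set.forall_mem_range.mpr fun n =>
    (hAB _ (Set.mem_range_self n)).trans (AlmostSub.of_subset_s8 (hB_sub n))⟩

section Invariants

variable {S : Set (Set ℕ)}

lemma aleph0_le_pInv (hS : S.Nonempty)
    (hne : ∃ F : Set (Set ℕ), CenteredIn S F ∧ ¬ HasLowerBoundIn S F) : ℵ₀ ≤ pInv S := by
  obtain ⟨F, hc, hub⟩ := hne
  refine le_csInf ⟨#F, F, hc, hub, rfl⟩ ?_
  rintro _ ⟨G, hc, hub, rfl⟩
  exact hc.aleph0_le_card hS hub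

lemma pInv_le_tInv (hS : IsSemifilter S)
    (hne : ∃ F : Set (Set ℕ), F ⊆ S ∧ IsChain AlmostSub F ∧ ¬ HasLowerBoundIn S F) :
    pInv S ≤ tInv S := by
  obtain ⟨F, hFS, hch, hub⟩ := hne
  refine csInf_le_csInf' ⟨#F, F, hFS, hch, hub, rfl⟩ ?_
  rintro _ ⟨G, hGS, hch, hub, rfl⟩
  exact ⟨G, centeredIn_of_isChain hS hGS hch, hub, rfl⟩

lemma aleph0_le_tInv (hS : IsSemifilter S)
    (hne : ∃ F : Set (Set ℕ), F ⊆ S ∧ IsChain AlmostSub F ∧ ¬ HasLowerBoundIn S F) :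
    ℵ₀ ≤ tInv S := by
  obtain ⟨F, hFS, hch, hub⟩ := hne
  exact (aleph0_le_pInv hS.1 ⟨F, centeredIn_of_isChain hS hFS hch, hub⟩).trans
    (pInv_le_tInv hS ⟨F, hFS, hch, hub⟩)

lemma tInv_le_continuum : tInv S ≤ 𝔠 := by
  rcases Set.eq_empty_or_nonempty
    {c | ∃ F : Set (Set ℕ), F ⊆ S ∧ IsChain AlmostSub F ∧ ¬ HasLowerBoundIn S F ∧ c = #F}
    with h | ⟨c, hc⟩
  · simp [tInv, h]
  · refine (csInf_le' hc).trans ?_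
    obtain ⟨F, -, -, -, rfl⟩ := hc
    exact mk_set_nat ▸ mk_set_le F

lemma pInv_eq_aleph0_and_tInv_eq_aleph0 (hS : IsSemifilter S)
    (hne : ∃ F : Set (Set ℕ), CenteredIn S F ∧ ¬ HasLowerBoundIn S F) (hp : pInv S ≤ ℵ₀) :
    pInv S = ℵ₀ ∧ tInv S = ℵ₀ := by
  obtain ⟨F, hc, hub, hF⟩ : pInv S ∈ {c | ∃ F : Set (Set ℕ), CenteredIn S F ∧
      ¬ HasLowerBoundIn S F ∧ c = #F} := by
    obtain ⟨F, hc, hub⟩ := hne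
    exact csInf_mem ⟨#F, F, hc, hub, rfl⟩
  obtain ⟨G, hGS, hch, hGub, hG⟩ :=
    hc.exists_isChain_of_countable hS.1 hub (mk_le_aleph0_iff.mp (hF ▸ hp))
  have htG : tInv S ≤ #G := csInf_le' ⟨G, hGS, hch, hGub, rfl⟩
  exact ⟨hp.antisymm (aleph0_le_pInv hS.1 hne),
    (htG.trans (mk_le_aleph0_iff.mpr hG.to_subtype)).antisymm
      (aleph0_le_tInv hS ⟨G, hGS, hch, hGub⟩)⟩

lemma pInv_eq_tInv_of_continuum_le_aleph_one (hCH : (𝔠 : Cardinal.{0}) ≤ ℵ₁)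
    (hS : IsSemifilter S)
    (hP : ∃ F : Set (Set ℕ), CenteredIn S F ∧ ¬ HasLowerBoundIn S F)
    (hT : ∃ F : Set (Set ℕ), F ⊆ S ∧ IsChain AlmostSub F ∧ ¬ HasLowerBoundIn S F) :
    pInv S = tInv S := by
  rcases le_or_gt (pInv S) ℵ₀ with hp | hp
  · obtain ⟨hp, ht⟩ := pInv_eq_aleph0_and_tInv_eq_aleph0 hS hP hp
    rw [hp, ht]
  · exact (pInv_le_tInv hS hT).antisymm
      (tInv_le_continuum.trans (hCH.trans (aleph_one_le_iff.mpr hp)))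

end Invariants

/-- If `𝔭_S ≤ ℵ₀` then `𝔭_S = 𝔱_S = ℵ₀`; consequently, under CH, `𝔭_S = 𝔱_S` for every
semifilter `S`.  (The existence hypotheses reflect the paper's standing assumption that
unbounded centered families and unbounded chains exist in `S`.) -/
theorem pInv_eq_tInv_of_countable :
    (∀ S : Set (Set ℕ), IsSemifilter S →
      (∃ F : Set (Set ℕ), CenteredIn S F ∧ ¬ HasLowerBoundIn S F) →
      pInv S ≤ ℵ₀ → pInv S = ℵ₀ ∧ tInv S = ℵ₀) ∧
    (Cardinal.continuum = Cardinal.aleph 1 →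
      ∀ S : Set (Set ℕ), IsSemifilter S →
        (∃ F : Set (Set ℕ), CenteredIn S F ∧ ¬ HasLowerBoundIn S F) →
        (∃ F : Set (Set ℕ), F ⊆ S ∧ IsChain AlmostSub F ∧ ¬ HasLowerBoundIn S F) →
        pInv S = tInv S) := by
  refine ⟨fun S => pInv_eq_aleph0_and_tInv_eq_aleph0, fun hCH S => ?_⟩
  -- `hCH` lives in an arbitrary universe; the invariants are cardinals in `Type`.
  have hCH₀ : (𝔠 : Cardinal.{0}) ≤ ℵ₁ :=
    lift_le_aleph_one.mp ((lift_continuum.{_, 0}).trans_le hCH.le)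
  exact pInv_eq_tInv_of_continuum_le_aleph_one hCH₀
end

section
/- Every set B ⊆ ω with B ⊆* {m·2^n : m ∈ ω} for all n ∈ ω is neither syndetic nor thick. Hence the semifilter of sets that are syndetic or thick contains the chain ⟨{m·2^n : m ∈ ω} : n ∈ ω⟩ but no lower bound for it. -/
/-- `A` is syndetic: some `k` is such that every interval of length `k` meets `A`. -/
def Syndetic (A : Set ℕ) : Prop := ∃ k : ℕ, ∀ m : ℕ, ∃ i, m ≤ i ∧ i < m + k ∧ i ∈ A

/-- `A` is thick: it contains arbitrarily long intervals. -/
def Thick (A : Set ℕ) : Prop := ∀ n : ℕ, ∃ a : ℕ, ∀ i, a ≤ i → i < a + n → i ∈ A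

/-- `A n = {m·2^n : m ∈ ω}`. -/
def Apow (n : ℕ) : Set ℕ := {x | ∃ m : ℕ, x = m * 2 ^ n}

/-!
Past a finite exception, a set `B` below the whole chain lies inside the multiples of `2 ^ k` for
every `k`. Multiples of `d` leave gaps of length `d - 1`, so `B` has gaps longer than any `k`
(take `d = 2 ^ k > k`) and is not syndetic; and `B` eventually contains only even numbers, so it
never contains two consecutive numbers and is not thick. Each set of the chain is itself
syndetic, hence no lower bound of the chain is syndetic or thick.
-/

lemma AlmostSub.exists_forall_ge_mem {A B : Set ℕ} (h : AlmostSub A B) :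
    ∃ N, ∀ x ∈ A, N ≤ x → x ∈ B := by
  obtain ⟨N, hN⟩ := h.bddAbove
  refine ⟨N + 1, fun x hxA hNx => ?_⟩
  by_contra hxB
  have := hN ⟨hxA, hxB⟩
  omega

lemma mem_apow_iff {n x : ℕ} : x ∈ Apow n ↔ 2 ^ n ∣ x :=
  dvd_iff_exists_eq_mul_left.symm

lemma syndetic_setOf_dvd {d : ℕ} (hd : 0 < d) : Syndetic {x | d ∣ x} := by
  refine ⟨d, fun m => ⟨(m + d - 1) / d * d, ?_, ?_, Nat.dvd_mul_left _ _⟩⟩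
  · have := Nat.lt_div_mul_add (a := m + d - 1) hd
    omega
  · have := Nat.div_mul_le_self (m + d - 1) d
    omega

lemma not_dvd_of_lt_of_lt_succ_mul {d N i : ℕ} (hlo : N * d < i) (hhi : i < (N + 1) * d) :
    ¬ d ∣ i := by
  rintro ⟨q, rfl⟩
  rw [mul_comm d q] at hlo hhi
  have := Nat.lt_of_mul_lt_mul_right hlo
  have := Nat.lt_of_mul_lt_mul_right hhi
  omega

lemma le_of_syndetic_of_forall_ge_dvd {B : Set ℕ} {k d N : ℕ}
    (hk : ∀ m, ∃ i, m ≤ i ∧ i < m + k ∧ i ∈ B) (hB : ∀ x ∈ B, N ≤ x → d ∣ x) : d ≤ k := by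
  by_contra! hkd
  obtain ⟨i, hmi, hik, hiB⟩ := hk (N * d + 1)
  have hNd : N ≤ N * d := Nat.le_mul_of_pos_right N (by omega)
  refine not_dvd_of_lt_of_lt_succ_mul (N := N) ?_ ?_ (hB i hiB (by omega))
  · omega
  · rw [Nat.succ_mul]
    omega

lemma Thick.eq_one_of_forall_ge_dvd {B : Set ℕ} {d N : ℕ} (hB : Thick B)
    (hd : ∀ x ∈ B, N ≤ x → d ∣ x) : d = 1 := by
  obtain ⟨a, ha⟩ := hB (N + 2)
  have hdvd := hd (a + N) (ha _ (by omega) (by omega)) (by omega)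
  have hdvd_succ := hd (a + N + 1) (ha _ (by omega) (by omega)) (by omega)
  exact Nat.dvd_one.mp ((Nat.dvd_add_right hdvd).mp hdvd_succ)

lemma not_syndetic_of_forall_almostSub_apow {B : Set ℕ} (h : ∀ n, AlmostSub B (Apow n)) :
    ¬ Syndetic B := by
  rintro ⟨k, hk⟩
  obtain ⟨N, hN⟩ := (h k).exists_forall_ge_mem
  exact Nat.lt_two_pow_self.not_ge <|
    le_of_syndetic_of_forall_ge_dvd hk fun x hxB hNx => mem_apow_iff.mp (hN x hxB hNx)

lemma not_thick_of_forall_almostSub_apow {B : Set ℕ} (h : ∀ n, AlmostSub B (Apow n)) :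
    ¬ Thick B := by
  intro hB
  obtain ⟨N, hN⟩ := (h 1).exists_forall_ge_mem
  have := hB.eq_one_of_forall_ge_dvd fun x hxB hNx => mem_apow_iff.mp (hN x hxB hNx)
  norm_num at this

/-- Every `B` with `B ⊆* {m·2^n : m ∈ ω}` for all `n` is neither syndetic nor thick;
hence the semifilter of sets that are syndetic or thick contains the chain
`⟨{m·2^n : m ∈ ω} : n ∈ ω⟩` but no lower bound for it. -/
theorem syndetic_or_thick_no_bound :
    (∀ B : Set ℕ, (∀ n : ℕ, AlmostSub B (Apow n)) → ¬ Syndetic B ∧ ¬ Thick B) ∧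
    (∀ n : ℕ, Apow n ∈ {A : Set ℕ | Syndetic A ∨ Thick A}) ∧
    ¬ ∃ L ∈ {A : Set ℕ | Syndetic A ∨ Thick A}, ∀ n : ℕ, AlmostSub L (Apow n) := by
  refine ⟨fun B hB => ⟨not_syndetic_of_forall_almostSub_apow hB,
    not_thick_of_forall_almostSub_apow hB⟩, fun n => Or.inl ?_, ?_⟩
  · have hset : Apow n = {x | 2 ^ n ∣ x} := Set.ext fun _ => mem_apow_iff
    exact hset ▸ syndetic_setOf_dvd (Nat.two_pow_pos n)
  · rintro ⟨L, hL | hL, hchain⟩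
    · exact not_syndetic_of_forall_almostSub_apow hchain hL
    · exact not_thick_of_forall_almostSub_apow hchain hL
end

section
/- For each n ∈ ω let A_n = {2^n(2k+1) : k ∈ ω}. Then ω \ {0} = ⋃_n A_n, no A_n is an IP set, and no IP set B satisfies that B ∩ A_n is finite for every n. Hence the semifilter of IP sets is not countably Ramsey. -/
/-- `A` is an IP set: there is an infinite (injective) sequence in `A` all of whose
finite nonempty sums lie in `A`. -/
def IPSet (A : Set ℕ) : Prop :=
  ∃ a : ℕ → ℕ, Function.Injective a ∧ (∀ i, a i ∈ A) ∧
    ∀ F : Finset ℕ, F.Nonempty → (∑ i ∈ F, a i) ∈ A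

/-- A semifilter `S` is countably Ramsey. -/
def CountablyRamsey (S : Set (Set ℕ)) : Prop :=
  ∀ A ∈ S, ∀ f : ℕ → Set ℕ, A = ⋃ n, f n →
    (∃ n, f n ∈ S) ∨ ∃ B : Set ℕ, B ⊆ A ∧ B ∈ S ∧ ∀ n, (B ∩ f n).Finite

/-- `A n = {2^n (2k+1) : k ∈ ω}`. -/
def Aodd (n : ℕ) : Set ℕ := {x | ∃ k : ℕ, x = 2 ^ n * (2 * k + 1)}

lemma aodd_ne_zero {n x : ℕ} (hx : x ∈ Aodd n) : x ≠ 0 := by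
  obtain ⟨k, rfl⟩ := hx; positivity

lemma mem_aodd_val {x : ℕ} (hx : x ≠ 0) : x ∈ Aodd (padicValNat 2 x) := by
  obtain ⟨m, hm⟩ := pow_padicValNat_dvd (p := 2) (n := x)
  have hodd : ¬ 2 ∣ m := by
    intro ⟨c, hc⟩
    refine pow_succ_padicValNat_not_dvd hx (p := 2) ⟨c, ?_⟩
    conv_lhs => rw [hm, hc]
    rw [pow_succ]; ring
  refine ⟨m / 2, ?_⟩
  conv_lhs => rw [hm]
  congr 1; omega

lemma aodd_val {n x : ℕ} (hx : x ∈ Aodd n) : padicValNat 2 x = n := by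
  obtain ⟨k, rfl⟩ := hx
  rw [padicValNat.mul (by positivity) (by positivity), padicValNat.prime_pow,
    padicValNat.eq_zero_of_not_dvd (by omega), Nat.add_zero]

lemma union_aodd : ({0}ᶜ : Set ℕ) = ⋃ n, Aodd n := by
  ext x
  simp only [Set.mem_compl_iff, Set.mem_singleton_iff, Set.mem_iUnion]
  constructor
  · exact fun hx => ⟨_, mem_aodd_val hx⟩
  · rintro ⟨n, hn⟩; exact aodd_ne_zero hn

lemma not_ip (n : ℕ) : ¬ IPSet (Aodd n) := by
  rintro ⟨a, hinj, hmem, hsum⟩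
  obtain ⟨k, hk⟩ := hmem 0
  obtain ⟨j, hj⟩ := hmem 1
  have h01 : (0 : ℕ) ≠ 1 := by norm_num
  have h := hsum {0, 1} ⟨0, by simp⟩
  rw [Finset.sum_pair h01] at h
  obtain ⟨m, hm⟩ := h
  rw [hk, hj, ← Nat.mul_add] at hm
  have h2 : (0:ℕ) < 2 ^ n := by positivity
  have := Nat.eq_of_mul_eq_mul_left h2 hm
  omega

lemma key (B : Set ℕ) (hB : IPSet B) : ¬ ∀ n, (B ∩ Aodd n).Finite := by
  intro hfin
  obtain ⟨a, hinj, hmem, hsum⟩ := hB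
  have hzfin : {i | a i = 0}.Finite := by
    apply Set.Finite.subset (Set.finite_singleton (Function.invFun a 0))
    intro i hi
    simp only [Set.mem_setOf_eq] at hi
    rw [Set.mem_singleton_iff, ← hi, Function.leftInverse_invFun hinj i]
  have hnz : {i | a i ≠ 0}.Infinite := by
    have h : {i | a i ≠ 0} = {i | a i = 0}ᶜ := by ext i; simp
    rw [h]
    exact Set.Finite.infinite_compl hzfin
  by_cases hI : ∃ n, {i | a i ∈ Aodd n}.Infinite
  · obtain ⟨n, hn⟩ := hI
    have himg : a '' {i | a i ∈ Aodd n} ⊆ B ∩ Aodd n := by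
      rintro x ⟨i, hi, rfl⟩; exact ⟨hmem i, hi⟩
    exact ((hfin n).subset himg).not_infinite (hn.image hinj.injOn)
  · push_neg at hI
    obtain ⟨i0, hi0⟩ := hnz.nonempty
    simp only [Set.mem_setOf_eq] at hi0
    set n := padicValNat 2 (a i0) with hn
    have hJ : {i | a i ≠ 0 ∧ padicValNat 2 (a i) ≤ n}.Finite := by
      have hsub : {i | a i ≠ 0 ∧ padicValNat 2 (a i) ≤ n} ⊆
          ⋃ m ∈ Finset.range (n+1), {i | a i ∈ Aodd m} := by
        rintro i ⟨h1, h2⟩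
        simp only [Set.mem_iUnion, Finset.mem_range]
        exact ⟨padicValNat 2 (a i), by omega, mem_aodd_val h1⟩
      exact Set.Finite.subset (Set.Finite.biUnion (Finset.range (n+1)).finite_toSet
        (fun m _ => hI m)) hsub
    set T := {i | a i ≠ 0 ∧ n < padicValNat 2 (a i)} with hT
    have hbig : T.Infinite := by
      have hsub : {i | a i ≠ 0} ⊆ {i | a i ≠ 0 ∧ padicValNat 2 (a i) ≤ n} ∪ T := by
        intro i hi; by_cases h : padicValNat 2 (a i) ≤ n
        · exact Or.inl ⟨hi, h⟩
        · exact Or.inr ⟨hi, by omega⟩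
      by_contra h
      rw [Set.not_infinite] at h
      exact hnz (Set.Finite.subset (hJ.union h) hsub)
    have himg : (fun i => a i0 + a i) '' T ⊆ B ∩ Aodd n := by
      rintro x ⟨i, ⟨hine, hival⟩, rfl⟩
      have hne : i0 ≠ i := by
        intro h; rw [← h, ← hn] at hival; omega
      constructor
      · have h := hsum {i0, i} ⟨i0, by simp⟩
        rwa [Finset.sum_pair hne] at h
      · obtain ⟨k0, hk0⟩ := mem_aodd_val hi0
        rw [← hn] at hk0
        obtain ⟨d, hd⟩ : ∃ d, padicValNat 2 (a i) = n + 1 + d :=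
          ⟨padicValNat 2 (a i) - (n + 1), by omega⟩
        obtain ⟨k, hk⟩ := mem_aodd_val hine
        rw [hd] at hk
        exact ⟨k0 + 2 ^ d * (2 * k + 1), by show a i0 + a i = _; rw [hk0, hk]; ring⟩
    have hinjOn : Set.InjOn (fun i => a i0 + a i) T := by
      intro x _ y _ h
      exact hinj (Nat.add_left_cancel h)
    exact ((hfin n).subset himg).not_infinite (hbig.image hinjOn)

/-- `ω \ {0} = ⋃ₙ Aₙ`, no `Aₙ` is an IP set, and no IP set meets every `Aₙ` finitely;
hence the semifilter of IP sets is not countably Ramsey. -/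
theorem ipSets_not_countably_ramsey :
    ({0}ᶜ : Set ℕ) = ⋃ n, Aodd n ∧
    (∀ n, ¬ IPSet (Aodd n)) ∧
    (∀ B : Set ℕ, IPSet B → ¬ ∀ n, (B ∩ Aodd n).Finite) ∧
    ¬ CountablyRamsey {A : Set ℕ | IPSet A} := by
  refine ⟨union_aodd, not_ip, key, ?_⟩
  intro hCR
  have hA : IPSet ({0}ᶜ : Set ℕ) := by
    refine ⟨fun i => i + 1, fun i j h => by simpa using h, fun i => by simp, fun F hF => ?_⟩
    simp only [Set.mem_compl_iff, Set.mem_singleton_iff]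
    obtain ⟨i, hi⟩ := hF
    have : 0 < ∑ j ∈ F, (j + 1) := Finset.sum_pos (fun j _ => by omega) ⟨i, hi⟩
    omega
  rcases hCR _ hA Aodd union_aodd with ⟨n, hn⟩ | ⟨B, _, hB, hBfin⟩
  · exact not_ip n hn
  · exact key B hB hBfin
end
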